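/- Let u be a word of length at least 2 over a well-ordered alphabet, with Shirshov factorization u = u_L u_R (where u_R is the pseudo-lexicographically largest proper suffix of u). Then u is a Lyndon word if and only if u_L and u_R are both Lyndon words and u_L >_lex u_R. -/

import Mathlib

variable {X : Type*} [LinearOrder X] [WellFoundedLT X]

/-- The partial order `≺` on words: `u ≺ v` iff `u = r ++ x :: s`, `v = r ++ y :: t`
with letters `x < y`. -/
def Prec (u v : List X) : Prop :=
  ∃ (r s t : List X) (x y : X), x < y ∧ u = r ++ x :: s ∧ v = r ++ y :: t

/-- The pseudo-lexicographic order: `u <_lex v` iff `v` is a proper prefix of `u` or `u ≺ v`. -/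
def PLex (u v : List X) : Prop :=
  (v <+: u ∧ v ≠ u) ∨ Prec u v

/-- `u ≤_lex v`. -/
def PLexLe (u v : List X) : Prop := u = v ∨ PLex u v

/-- A Lyndon word (Kharchenko convention): a nonempty word strictly greater in the
pseudo-lexicographic order than each of its proper nonempty suffixes. -/
def IsLyndon (u : List X) : Prop :=
  u ≠ [] ∧ ∀ v w : List X, u = v ++ w → v ≠ [] → w ≠ [] → PLex w u


/-- The Shirshov factorization of `u`: `u = uL ++ uR` where `uR` is the
pseudo-lexicographically largest proper (nonempty) suffix of `u`. -/
def IsShirshov (u uL uR : List X) : Prop :=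
  u = uL ++ uR ∧ uL ≠ [] ∧ uR ≠ [] ∧
    ∀ w : List X, w <:+ u → w ≠ u → w ≠ [] → w = uR ∨ PLex w uR

/-!
Comparing words in `<_lex` amounts to comparing them letter by letter, with the end of a word
counting as larger than every letter; this makes `<_lex` a strict total order, compatible with
common left factors.

If `u_R <_lex u_L` and `u_R` is Lyndon, then `u_R <_lex u_L u_R`, and every proper suffix of `u`
is `≤_lex u_R` by maximality, so `u` is Lyndon. Conversely, `u_R` is always Lyndon, being maximal
among the suffixes of `u`, and `u_R <_lex u <_lex u_L` because `u_L` is a prefix of `u`. For a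
proper suffix `w` of `u_L`, maximality gives `w u_R <_lex u_R <_lex u`; if we had `u_L <_lex w`,
either through a first differing letter or because `u_L = w m`, where then `m u_R <_lex u_R`, we
would get `u <_lex w u_R`, a contradiction.
-/

section PLexOrder

variable {α : Type*} [LinearOrder α]

theorem not_plex_nil_left (v : List α) : ¬ PLex [] v := by
  rintro (⟨h, hne⟩ | ⟨r, s, t, x, y, -, h, -⟩)
  · exact hne (List.prefix_nil.mp h)
  · simp at h

theorem plex_nil_right_iff (u : List α) : PLex u [] ↔ u ≠ [] :=
  ⟨fun h hu => not_plex_nil_left [] (hu ▸ h), fun h => .inl ⟨List.nil_prefix, h.symm⟩⟩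

theorem plex_cons_cons_iff {x y : α} {s t : List α} :
    PLex (x :: s) (y :: t) ↔ x < y ∨ x = y ∧ PLex s t := by
  constructor
  · rintro (⟨hpre, hne⟩ | ⟨r, s', t', a, b, hab, hs, ht⟩)
    · obtain ⟨rfl, hts⟩ := List.cons_prefix_cons.mp hpre
      exact .inr ⟨rfl, .inl ⟨hts, fun h => hne (h ▸ rfl)⟩⟩
    · rcases r with _ | ⟨c, r⟩
      · simp only [List.nil_append, List.cons.injEq] at hs ht
        exact .inl (hs.1 ▸ ht.1 ▸ hab)
      · simp only [List.cons_append, List.cons.injEq] at hs ht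
        exact .inr ⟨hs.1.trans ht.1.symm, .inr ⟨r, s', t', a, b, hab, hs.2, ht.2⟩⟩
  · rintro (hxy | ⟨rfl, ⟨hpre, hne⟩ | ⟨r, s', t', a, b, hab, rfl, rfl⟩⟩)
    · exact .inr ⟨[], s, t, x, y, hxy, rfl, rfl⟩
    · exact .inl ⟨List.cons_prefix_cons.mpr ⟨rfl, hpre⟩, fun h => hne (List.cons.inj h).2⟩
    · exact .inr ⟨x :: r, s', t', a, b, hab, rfl, rfl⟩

theorem plex_irrefl (u : List α) : ¬ PLex u u := by
  induction u with
  | nil => exact not_plex_nil_left []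
  | cons x s ih => simp [plex_cons_cons_iff, ih]

theorem PLex.trans {u v w : List α} (huv : PLex u v) (hvw : PLex v w) : PLex u w := by
  induction u generalizing v w with
  | nil => exact absurd huv (not_plex_nil_left v)
  | cons x s ih =>
    match v, w, huv, hvw with
    | [], _, _, hvw => exact absurd hvw (not_plex_nil_left _)
    | _ :: _, [], _, _ => exact (plex_nil_right_iff _).2 (List.cons_ne_nil _ _)
    | y :: t, z :: q, huv, hvw =>
      rw [plex_cons_cons_iff] at huv hvw ⊢
      rcases huv with hxy | ⟨rfl, hst⟩ <;> rcases hvw with hyz | ⟨rfl, htq⟩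
      · exact .inl (hxy.trans hyz)
      · exact .inl hxy
      · exact .inl hyz
      · exact .inr ⟨rfl, ih hst htq⟩

theorem plex_trichotomy (u v : List α) : PLex u v ∨ u = v ∨ PLex v u := by
  induction u generalizing v with
  | nil =>
    rcases v with _ | ⟨y, t⟩
    · exact .inr (.inl rfl)
    · exact .inr (.inr ((plex_nil_right_iff _).2 (List.cons_ne_nil _ _)))
  | cons x s ih =>
    rcases v with _ | ⟨y, t⟩
    · exact .inl ((plex_nil_right_iff _).2 (List.cons_ne_nil _ _))
    · simp only [plex_cons_cons_iff, List.cons.injEq]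
      rcases lt_trichotomy x y with hxy | rfl | hxy
      · exact .inl (.inl hxy)
      · rcases ih t with h | h | h <;> simp [h]
      · exact .inr (.inr (.inl hxy))

theorem plex_append_left_iff (c : List α) {a b : List α} :
    PLex (c ++ a) (c ++ b) ↔ PLex a b := by
  induction c with
  | nil => rfl
  | cons x c ih => simp [plex_cons_cons_iff, ih]

theorem plex_append_of_ne_nil (u : List α) {v : List α} (hv : v ≠ []) : PLex (u ++ v) u :=
  .inl ⟨List.prefix_append u v, by simpa using hv.symm⟩

theorem Prec.append {a b : List α} (h : Prec a b) (c d : List α) : Prec (a ++ c) (b ++ d) := by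
  obtain ⟨r, s, t, x, y, hxy, rfl, rfl⟩ := h
  exact ⟨r, s ++ c, t ++ d, x, y, hxy, by simp, by simp⟩

end PLexOrder

section Shirshov

variable {α : Type*} [LinearOrder α] {u uL uR : List α}

theorem IsLyndon.plex_append {v : List α} (hv : IsLyndon v) (hu : u ≠ []) (h : PLex v u) :
    PLex v (u ++ v) := by
  rcases h with ⟨⟨d, rfl⟩, hne⟩ | hprec
  · have hd : d ≠ [] := by rintro rfl; simp at hne
    exact (plex_append_left_iff u).2 (hv.2 u d rfl hu hd)
  · exact .inr (by simpa using hprec.append [] v)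

theorem IsShirshov.plex_right_of_eq_append (hS : IsShirshov u uL uR) {v w : List α}
    (h : u = v ++ w) (hv : v ≠ []) (hw : w ≠ []) (hlen : w.length ≠ uR.length) :
    PLex w uR := by
  have hwu : w ≠ u := fun hwu => hv (by simpa [← hwu] using congrArg List.length h)
  exact (hS.2.2.2 w ⟨v, h.symm⟩ hwu hw).resolve_left fun hwR => hlen (hwR ▸ rfl)

theorem IsShirshov.isLyndon_right (hS : IsShirshov u uL uR) : IsLyndon uR := by
  refine ⟨hS.2.2.1, fun v w hvw hv hw =>
    hS.plex_right_of_eq_append (v := uL ++ v) ?_ (by simp [hS.2.1]) hw ?_⟩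
  · rw [hS.1, hvw, List.append_assoc]
  · have := List.length_pos_iff.2 hv
    simp only [hvw, List.length_append]
    omega

theorem IsShirshov.plex_right_left (hS : IsShirshov u uL uR) (hu : IsLyndon u) :
    PLex uR uL := by
  have hRu : PLex uR (uL ++ uR) := hS.1 ▸ hu.2 uL uR hS.1 hS.2.1 hS.2.2.1
  exact hRu.trans (plex_append_of_ne_nil uL hS.2.2.1)

theorem IsShirshov.isLyndon_left (hS : IsShirshov u uL uR) (hu : IsLyndon u) : IsLyndon uL := by
  refine ⟨hS.2.1, fun v w hvw hv hw => ?_⟩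
  have hRu : PLex uR u := hu.2 uL uR hS.1 hS.2.1 hS.2.2.1
  have hwR : PLex (w ++ uR) uR :=
    hS.plex_right_of_eq_append (v := v) (by simp [hS.1, hvw]) hv (by simp [hw])
      (by simpa using hw)
  -- `uL <_lex w` would give `u <_lex w uR`, closing the cycle `u < w uR < uR < u`.
  have hu_lt_of (hLw : PLex uL w) : PLex u (w ++ uR) := by
    rw [hS.1]
    rcases hLw with ⟨⟨m, hwm⟩, hne⟩ | hprec
    · have hm : m ≠ [] := by rintro rfl; exact hne (by simpa using hwm)
      have hmR : PLex (m ++ uR) uR :=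
        hS.plex_right_of_eq_append (v := w) (by simp [hS.1, ← hwm]) hw (by simp [hm])
          (by simpa using hm)
      simpa [← hwm] using (plex_append_left_iff w).2 hmR
    · exact .inr (hprec.append uR uR)
  rcases plex_trichotomy w uL with hwL | rfl | hLw
  · exact hwL
  · exact absurd (congrArg List.length hvw) (by simpa using hv)
  · exact absurd (((hu_lt_of hLw).trans hwR).trans hRu) (plex_irrefl _)

theorem IsShirshov.isLyndon_of_plex (hS : IsShirshov u uL uR) (hR : IsLyndon uR)
    (hRL : PLex uR uL) : IsLyndon u := by
  obtain ⟨rfl, hL, -, hmax⟩ := hS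
  have hRu : PLex uR (uL ++ uR) := hR.plex_append hL hRL
  refine ⟨by simp [hL], fun v w hvw hv hw => ?_⟩
  have hwu : w ≠ uL ++ uR := fun h => hv (by simpa [← h] using congrArg List.length hvw)
  rcases hmax w ⟨v, hvw.symm⟩ hwu hw with rfl | hwR
  · exact hRu
  · exact hwR.trans hRu

end Shirshov

theorem isLyndon_iff_shirshov_general (u uL uR : List X)
    (hS : IsShirshov u uL uR) :
    IsLyndon u ↔ IsLyndon uL ∧ IsLyndon uR ∧ PLex uR uL :=
  ⟨fun hu => ⟨hS.isLyndon_left hu, hS.isLyndon_right, hS.plex_right_left hu⟩,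
    fun ⟨_, hR, hRL⟩ => hS.isLyndon_of_plex hR hRL⟩

/-- A word `u` of length `≥ 2` with Shirshov factorization
`u = uL ++ uR` is Lyndon iff `uL` and `uR` are both Lyndon and `uL >_lex uR`. -/
theorem isLyndon_iff_shirshov (u uL uR : List X) (hlen : 2 ≤ u.length)
    (hS : IsShirshov u uL uR) :
    IsLyndon u ↔ IsLyndon uL ∧ IsLyndon uR ∧ PLex uR uL :=
  isLyndon_iff_shirshov_general u uL uR hS
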